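/- arXiv:2407.11953 — 2 statements merged into one kernel-verified Lean document; each statement's English description precedes it below -/
import Mathlib

section
/- Let e_m, e_n be orthogonal real unit pure quaternions, φ a real number, and u = 1 + (e_m + i e_n) φ/2 (= exp[(e_m + i e_n)φ/2]). Then the minquat x = e0 + i e_m e_n satisfies u x (ū)* = x; i.e. x is an eigenminquat of the singular proper Lorentz rotation with eigenvalue 1. -/
open scoped Quaternion

/-!
With `a = e_m + i e_n` and `b = e_m - i e_n`, the anticommutation of the orthogonal units
`e_m, e_n` gives `a x = 0` and `x b = 0`. Since `e_m, e_n` are real and pure, `(ū)* = 1 - (φ/2) b`,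
so `u x (ū)* = (x + (φ/2) a x)(1 - (φ/2) b) = x - (φ/2) x b = x`.
-/

/-- Componentwise complex conjugation of a complex quaternion. -/
noncomputable def cconj (q : ℍ[ℂ]) : ℍ[ℂ] :=
  ⟨(starRingEnd ℂ) q.re, (starRingEnd ℂ) q.imI, (starRingEnd ℂ) q.imJ, (starRingEnd ℂ) q.imK⟩

/-- Dot product of complex quaternions. -/
noncomputable def qdot (q r : ℍ[ℂ]) : ℂ :=
  q.re * r.re + q.imI * r.imI + q.imJ * r.imJ + q.imK * r.imK

theorem Quaternion.mul_comm_eq_neg_of_re_eq_zero {R : Type*} [CommRing R] {a b : ℍ[R]}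
    (ha : a.re = 0) (hb : b.re = 0)
    (hab : a.imI * b.imI + a.imJ * b.imJ + a.imK * b.imK = 0) :
    b * a = -(a * b) := by
  ext <;> simp only [Quaternion.re_mul, Quaternion.imI_mul, Quaternion.imJ_mul,
    Quaternion.imK_mul, Quaternion.re_neg, Quaternion.imI_neg, Quaternion.imJ_neg,
    Quaternion.imK_neg, ha, hb]
  · linear_combination (-2 : R) * hab
  all_goals ring

section NullProducts

variable {A : Type*} [Ring A] [Algebra ℂ A] {e f : A}

theorem add_I_smul_mul_one_add_I_smul_mul (he : e * e = -1) (hf : f * f = -1)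
    (hfe : f * e = -(e * f)) :
    (e + Complex.I • f) * (1 + Complex.I • (e * f)) = 0 := by
  have hef : e * (e * f) = -f := by rw [← mul_assoc, he, neg_one_mul]
  have hfef : f * (e * f) = e := by rw [← mul_assoc, hfe, neg_mul, mul_assoc, hf]; simp
  simp only [add_mul, mul_add, mul_one, mul_smul_comm, smul_mul_assoc, hef, hfef]
  simp only [smul_add, smul_neg, smul_smul, Complex.I_mul_I, neg_smul, one_smul]
  abel

theorem one_add_I_smul_mul_mul_sub_I_smul (he : e * e = -1) (hf : f * f = -1)
    (hfe : f * e = -(e * f)) :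
    (1 + Complex.I • (e * f)) * (e - Complex.I • f) = 0 := by
  have hefe : e * f * e = f := by rw [mul_assoc, hfe, mul_neg, ← mul_assoc, he]; simp
  have heff : e * f * f = -e := by rw [mul_assoc, hf, mul_neg_one]
  simp only [add_mul, mul_sub, one_mul, mul_smul_comm, smul_mul_assoc, hefe, heff]
  simp only [smul_add, smul_neg, smul_smul, Complex.I_mul_I, neg_smul, one_smul]
  abel

theorem one_add_smul_mul_mul_one_sub_smul (he : e * e = -1) (hf : f * f = -1)
    (hfe : f * e = -(e * f)) (c : ℂ) :
    (1 + c • (e + Complex.I • f)) * (1 + Complex.I • (e * f)) *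
        (1 - c • (e - Complex.I • f)) =
      1 + Complex.I • (e * f) := by
  rw [add_mul, one_mul, smul_mul_assoc, add_I_smul_mul_one_add_I_smul_mul he hf hfe,
    smul_zero, add_zero, mul_sub, mul_one, mul_smul_comm,
    one_add_I_smul_mul_mul_sub_I_smul he hf hfe, smul_zero, sub_zero]

end NullProducts

@[simp] theorem cconj_one : cconj 1 = 1 := by ext <;> simp [cconj]

@[simp] theorem cconj_add (q r : ℍ[ℂ]) : cconj (q + r) = cconj q + cconj r := by
  ext <;> simp [cconj] <;> rfl

@[simp] theorem cconj_smul (z : ℂ) (q : ℍ[ℂ]) :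
    cconj (z • q) = starRingEnd ℂ z • cconj q := by
  ext <;> simp [cconj] <;> rfl

theorem qdot_eq_of_re_eq_zero {q r : ℍ[ℂ]} (hq : q.re = 0) (hr : r.re = 0) :
    qdot q r = q.imI * r.imI + q.imJ * r.imJ + q.imK * r.imK := by
  simp [qdot, hq, hr]

theorem star_cconj_one_add_smul {e f : ℍ[ℂ]} (he : cconj e = e) (hf : cconj f = f)
    (he0 : e.re = 0) (hf0 : f.re = 0) (r : ℝ) :
    star (cconj (1 + (r : ℂ) • (e + Complex.I • f))) = 1 - (r : ℂ) • (e - Complex.I • f) := by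
  simp only [cconj_add, cconj_one, cconj_smul, Complex.conj_ofReal, Complex.conj_I, he, hf]
  -- `star_add` fails to unify its `StarAddMonoid` instance with the one on `ℍ[ℂ]` here.
  rw [StarRing.star_add, star_one, Quaternion.star_smul, StarRing.star_add, Quaternion.star_smul,
    Quaternion.star_eq_neg.mpr he0, Quaternion.star_eq_neg.mpr hf0]
  module

/-- For orthogonal real unit pure quaternions `e_m, e_n`, real `φ`, and
`u = 1 + (e_m + i e_n) φ/2 (= exp[(e_m + i e_n) φ/2])`, the null minquat
`x = e0 + i e_m e_n` satisfies `u x (ū)* = x`: it is an eigenminquat of the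
singular proper Lorentz rotation with eigenvalue `1`. -/
theorem singular_rotation_eigenminquat (em en : ℍ[ℂ])
    (hmreal : cconj em = em) (hnreal : cconj en = en)
    (hm0 : em.re = 0) (hn0 : en.re = 0)
    (hm1 : em * em = -1) (hn1 : en * en = -1)
    (horth : qdot em en = 0) (φ : ℝ)
    (u : ℍ[ℂ]) (hu : u = 1 + ((φ / 2 : ℝ) : ℂ) • (em + Complex.I • en)) :
    u * (1 + Complex.I • (em * en)) * star (cconj u) =
      1 + Complex.I • (em * en) := by
  have hanti : en * em = -(em * en) :=
    Quaternion.mul_comm_eq_neg_of_re_eq_zero hm0 hn0 (qdot_eq_of_re_eq_zero hm0 hn0 ▸ horth)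
  rw [hu, star_cconj_one_add_smul hmreal hnreal hm0 hn0]
  exact one_add_smul_mul_mul_one_sub_smul hm1 hn1 hanti _
end

section
/- (Malus law, intrinsic form) Let e_n and e_p be real unit pure quaternions, X0 > 0, and X = X0(1 + i e_n). Then (X0/4)(1 + i e_p)(1 + i e_n)(1 + i e_p) = (X0/2)(1 + e_n · e_p)(1 + i e_p). In particular, the emerging state from a pure polarizer of axis e_p is completely polarized along e_p with power (X0/2)(1 + cos α), where cos α = e_n · e_p. -/
open scoped Quaternion

/-- Malus law (intrinsic form): for real unit pure quaternions `e_n, e_p` and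
`X0 > 0`, `(X0/4)(1 + i e_p)(1 + i e_n)(1 + i e_p) = (X0/2)(1 + e_n · e_p)(1 + i e_p)`:
the state emerging from a pure polarizer of axis `e_p` is completely polarized along
`e_p` with power `(X0/2)(1 + e_n · e_p)`. -/
theorem malus_law (en ep : ℍ[ℂ])
    (hnreal : cconj en = en) (hpreal : cconj ep = ep)
    (hn0 : en.re = 0) (hp0 : ep.re = 0)
    (hn1 : en * en = -1) (hp1 : ep * ep = -1)
    (X0 : ℝ) (hX0 : 0 < X0) :
    (((X0 : ℝ) : ℂ) / 4) •
        ((1 + Complex.I • ep) * (1 + Complex.I • en) * (1 + Complex.I • ep)) =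
      ((((X0 : ℝ) : ℂ) / 2) * (1 + qdot en ep)) • (1 + Complex.I • ep) := by
  have hp1' := congrArg QuaternionAlgebra.re hp1
  simp [Quaternion.re_mul, hp0] at hp1'
  have hI : (Complex.I : ℂ) ^ 2 = -1 := Complex.I_sq
  ext <;>
    simp [qdot, Quaternion.re_mul, Quaternion.imI_mul, Quaternion.imJ_mul, Quaternion.imK_mul,
      hn0, hp0]
  · linear_combination (norm := ring_nf) (-(X0:ℂ)/4) * hp1' +
      (-(X0:ℂ)/2*(ep.imI*en.imI+ep.imJ*en.imJ+ep.imK*en.imK)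
        - (X0:ℂ)/4*(ep.imI^2+ep.imJ^2+ep.imK^2)) * hI
  · linear_combination (norm := ring_nf) (Complex.I*(X0:ℂ)*en.imI/4) * hp1' +
      (Complex.I*((X0:ℂ)*(ep.imI*ep.imJ*en.imJ*(-1/2)+ep.imI*ep.imK*en.imK*(-1/2)
        +ep.imI^2*en.imI*(-1/4)+en.imI*ep.imJ^2*(1/4)+en.imI*ep.imK^2*(1/4)))) * hI
  · linear_combination (norm := ring_nf) (Complex.I*(X0:ℂ)*en.imJ/4) * hp1' +
      (Complex.I*((X0:ℂ)*(ep.imJ*ep.imI*en.imI*(-1/2)+ep.imJ*ep.imK*en.imK*(-1/2)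
        +ep.imJ^2*en.imJ*(-1/4)+en.imJ*ep.imI^2*(1/4)+en.imJ*ep.imK^2*(1/4)))) * hI
  · linear_combination (norm := ring_nf) (Complex.I*(X0:ℂ)*en.imK/4) * hp1' +
      (Complex.I*((X0:ℂ)*(ep.imK*ep.imI*en.imI*(-1/2)+ep.imK*ep.imJ*en.imJ*(-1/2)
        +ep.imK^2*en.imK*(-1/4)+en.imK*ep.imI^2*(1/4)+en.imK*ep.imJ^2*(1/4)))) * hI
end
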